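/- arXiv:2210.11960 — 11 statements merged into one kernel-verified Lean document; each statement's English description precedes it below -/
import Mathlib

section
/- Let V be a real inner product space, let T : V → V be a linear map satisfying ⟪T x, x⟫ ≤ 0 for all x ∈ V, let h ≥ 0, let φ0, φ1, φ2, y1, y2, y3 ∈ V and E0, E1, E2 ∈ ℝ. Suppose the discrete variational derivative relations hold: E1 − E0 = ⟪φ1 − φ0, y1⟫, E2 − E0 = ⟪φ2 − φ0, y2⟫, E2 − E1 = ⟪φ2 − φ1, y3⟫; and the two-stage scheme Sch-2 equations hold: φ1 − φ0 = h • T ((7/18) • y1 − (1/6) • y2 + (1/9) • y3) and φ2 − φ0 = h • T ((1/2) • y1 − (1/2) • y2 + y3). Then E2 ≤ E0. -/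
open RealInnerProductSpace

/-- Theorem 2.2 of the paper for the two-stage, third-order scheme Sch-2:
unconditional energy stability. -/
theorem sch2_energy_stable
    {V : Type*} [NormedAddCommGroup V] [InnerProductSpace ℝ V]
    (T : V →ₗ[ℝ] V) (hT : ∀ x : V, ⟪T x, x⟫ ≤ 0)
    (h : ℝ) (hh : 0 ≤ h)
    (φ0 φ1 φ2 y1 y2 y3 : V) (E0 E1 E2 : ℝ)
    (hdvd1 : E1 - E0 = ⟪φ1 - φ0, y1⟫)
    (hdvd2 : E2 - E0 = ⟪φ2 - φ0, y2⟫)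
    (hdvd3 : E2 - E1 = ⟪φ2 - φ1, y3⟫)
    (hscheme1 : φ1 - φ0 = h • T (((7:ℝ)/18) • y1 - ((1:ℝ)/6) • y2 + ((1:ℝ)/9) • y3))
    (hscheme2 : φ2 - φ0 = h • T (((1:ℝ)/2) • y1 - ((1:ℝ)/2) • y2 + y3)) :
    E2 ≤ E0 := by
  set u : V := ((7:ℝ)/18) • y1 - ((1:ℝ)/6) • y2 + ((1:ℝ)/9) • y3 with hu
  set v : V := ((1:ℝ)/2) • y1 - ((1:ℝ)/2) • y2 + y3 with hv
  have h21 : φ2 - φ1 = h • T v - h • T u := by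
    rw [← hscheme1, ← hscheme2]; abel
  have e1 : E1 - E0 = h * ⟪T u, y1⟫ := by
    rw [hdvd1, hscheme1, real_inner_smul_left]
  have e2 : E2 - E0 = h * ⟪T v, y2⟫ := by
    rw [hdvd2, hscheme2, real_inner_smul_left]
  have e3 : E2 - E1 = h * ⟪T v, y3⟫ - h * ⟪T u, y3⟫ := by
    rw [hdvd3, h21, inner_sub_left, real_inner_smul_left, real_inner_smul_left]
  have key : E2 - E0 = h * ((9/2) * ⟪T (u - (1/2:ℝ) • v), u - (1/2:ℝ) • v⟫
      + (9/4) * ⟪T u, u⟫ + (5/8) * ⟪T v, v⟫) := by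
    simp only [hu, hv, map_add, map_sub, map_smul, inner_add_left, inner_sub_left,
      real_inner_smul_left, inner_add_right, inner_sub_right, real_inner_smul_right] at e1 e2 e3 ⊢
    linear_combination (3/2) * e1 + (3/2) * e3 - (1/2) * e2
  have s1 := hT (u - (1/2:ℝ) • v)
  have s2 := hT u
  have s3 := hT v
  nlinarith [mul_nonneg hh (neg_nonneg.mpr s1), mul_nonneg hh (neg_nonneg.mpr s2),
    mul_nonneg hh (neg_nonneg.mpr s3)]
end

section
/- Let V be a real inner product space, let T : V → V be a linear map satisfying ⟪T x, x⟫ ≤ 0 for all x ∈ V, let h ≥ 0, let φ0, φ1, φ2, y1, y2, y3 ∈ V and E0, E1, E2 ∈ ℝ. Suppose the discrete variational derivative relations hold: E1 − E0 = ⟪φ1 − φ0, y1⟫, E2 − E0 = ⟪φ2 − φ0, y2⟫, E2 − E1 = ⟪φ2 − φ1, y3⟫; and the two-stage scheme Sch-3 equations hold: φ1 − φ0 = h • T ((7/12) • y1 − (1/6) • y2 + (1/12) • y3) and φ2 − φ0 = h • T ((2/3) • y1 − (1/3) • y2 + (2/3) • y3). Then E2 ≤ E0. -/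
open RealInnerProductSpace

/-- Theorem 2.2 of the paper for the two-stage, fourth-order scheme Sch-3:
unconditional energy stability. -/
theorem sch3_energy_stable
    {V : Type*} [NormedAddCommGroup V] [InnerProductSpace ℝ V]
    (T : V →ₗ[ℝ] V) (hT : ∀ x : V, ⟪T x, x⟫ ≤ 0)
    (h : ℝ) (hh : 0 ≤ h)
    (φ0 φ1 φ2 y1 y2 y3 : V) (E0 E1 E2 : ℝ)
    (hdvd1 : E1 - E0 = ⟪φ1 - φ0, y1⟫)
    (hdvd2 : E2 - E0 = ⟪φ2 - φ0, y2⟫)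
    (hdvd3 : E2 - E1 = ⟪φ2 - φ1, y3⟫)
    (hscheme1 : φ1 - φ0 = h • T (((7:ℝ)/12) • y1 - ((1:ℝ)/6) • y2 + ((1:ℝ)/12) • y3))
    (hscheme2 : φ2 - φ0 = h • T (((2:ℝ)/3) • y1 - ((1:ℝ)/3) • y2 + ((2:ℝ)/3) • y3)) :
    E2 ≤ E0 := by
  have hφ : φ2 - φ1 = (φ2 - φ0) - (φ1 - φ0) := by abel
  have e1 : E1 - E0 = h * ((7/12) * ⟪T y1, y1⟫ - (1/6) * ⟪T y2, y1⟫
      + (1/12) * ⟪T y3, y1⟫) := by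
    rw [hdvd1, hscheme1]
    simp [map_add, map_sub, map_smul, inner_add_left, inner_sub_left,
      real_inner_smul_left]
    ring
  have e2 : E2 - E0 = h * ((2/3) * ⟪T y1, y2⟫ - (1/3) * ⟪T y2, y2⟫
      + (2/3) * ⟪T y3, y2⟫) := by
    rw [hdvd2, hscheme2]
    simp [map_add, map_sub, map_smul, inner_add_left, inner_sub_left,
      real_inner_smul_left]
    ring
  have e3 : E2 - E1 = h * ((1/12) * ⟪T y1, y3⟫ - (1/6) * ⟪T y2, y3⟫
      + (7/12) * ⟪T y3, y3⟫) := by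
    rw [hdvd3, hφ, hscheme1, hscheme2]
    simp [map_add, map_sub, map_smul, inner_add_left, inner_sub_left,
      real_inner_smul_left]
    ring
  have huu : ⟪T (y1 - y3), y1 - y3⟫ = ⟪T y1, y1⟫ - ⟪T y1, y3⟫
      - ⟪T y3, y1⟫ + ⟪T y3, y3⟫ := by
    simp [map_sub, inner_sub_left, inner_sub_right]
    ring
  have hvv : ⟪T ((2:ℝ) • y1 - y2 + (2:ℝ) • y3), (2:ℝ) • y1 - y2 + (2:ℝ) • y3⟫
      = 4 * ⟪T y1, y1⟫ - 2 * ⟪T y1, y2⟫ + 4 * ⟪T y1, y3⟫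
        - 2 * ⟪T y2, y1⟫ + ⟪T y2, y2⟫ - 2 * ⟪T y2, y3⟫
        + 4 * ⟪T y3, y1⟫ - 2 * ⟪T y3, y2⟫ + 4 * ⟪T y3, y3⟫ := by
    simp only [map_add, map_sub, map_smul, inner_add_left, inner_sub_left,
      inner_add_right, inner_sub_right, real_inner_smul_left, real_inner_smul_right]
    ring
  have key : E2 - E0 = h * ((1/3) * ⟪T (y1 - y3), y1 - y3⟫
      + (1/9) * ⟪T ((2:ℝ) • y1 - y2 + (2:ℝ) • y3), (2:ℝ) • y1 - y2 + (2:ℝ) • y3⟫) := by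
    linear_combination (4/3) * e1 - (1/3) * e2 + (4/3) * e3
      - (h/3) * huu - (h/9) * hvv
  have h1 := hT (y1 - y3)
  have h2 := hT ((2:ℝ) • y1 - y2 + (2:ℝ) • y3)
  nlinarith [mul_nonneg hh (neg_nonneg.2 h1), mul_nonneg hh (neg_nonneg.2 h2)]
end

section
/- Let V be a real inner product space, let T : V → V be a linear map satisfying ⟪T x, x⟫ ≤ 0 for all x ∈ V, let h ≥ 0, let φ0, φ1, φ2, φ3, y1, y2, y3, y4, y5, y6 ∈ V and E0, E1, E2, E3 ∈ ℝ. Suppose the discrete variational derivative relations hold: E1 − E0 = ⟪φ1 − φ0, y1⟫, E2 − E0 = ⟪φ2 − φ0, y2⟫, E3 − E0 = ⟪φ3 − φ0, y3⟫, E2 − E1 = ⟪φ2 − φ1, y4⟫, E3 − E1 = ⟪φ3 − φ1, y5⟫, E3 − E2 = ⟪φ3 − φ2, y6⟫; and the three-stage scheme Sch-4 equations hold: φ1 − φ0 = h • T ((25/72) • y1 − (1/24) • y3 + (1/72) • y4 + (1/72) • y6), φ2 − φ0 = h • T ((13/36) • y1 − (1/12) • y3 + (13/36) • y4 + (1/36)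 • y6), and φ3 − φ0 = h • T ((3/8) • y1 − (1/8) • y3 + (3/8) • y4 + (3/8) • y6). Then E3 ≤ E0. -/
open RealInnerProductSpace

/-- Theorem 2.2 of the paper for the three-stage, fourth-order scheme Sch-4:
unconditional energy stability. -/
theorem sch4_energy_stable
    {V : Type*} [NormedAddCommGroup V] [InnerProductSpace ℝ V]
    (T : V →ₗ[ℝ] V) (hT : ∀ x : V, ⟪T x, x⟫ ≤ 0)
    (h : ℝ) (hh : 0 ≤ h)
    (φ0 φ1 φ2 φ3 y1 y2 y3 y4 y5 y6 : V) (E0 E1 E2 E3 : ℝ)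
    (hdvd1 : E1 - E0 = ⟪φ1 - φ0, y1⟫)
    (hdvd2 : E2 - E0 = ⟪φ2 - φ0, y2⟫)
    (hdvd3 : E3 - E0 = ⟪φ3 - φ0, y3⟫)
    (hdvd4 : E2 - E1 = ⟪φ2 - φ1, y4⟫)
    (hdvd5 : E3 - E1 = ⟪φ3 - φ1, y5⟫)
    (hdvd6 : E3 - E2 = ⟪φ3 - φ2, y6⟫)
    (hscheme1 : φ1 - φ0 =
      h • T (((25:ℝ)/72) • y1 - ((1:ℝ)/24) • y3 + ((1:ℝ)/72) • y4 + ((1:ℝ)/72) • y6))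
    (hscheme2 : φ2 - φ0 =
      h • T (((13:ℝ)/36) • y1 - ((1:ℝ)/12) • y3 + ((13:ℝ)/36) • y4 + ((1:ℝ)/36) • y6))
    (hscheme3 : φ3 - φ0 =
      h • T (((3:ℝ)/8) • y1 - ((1:ℝ)/8) • y3 + ((3:ℝ)/8) • y4 + ((3:ℝ)/8) • y6)) :
    E3 ≤ E0 := by

  -- differences between stages
  have h21 : φ2 - φ1 =
      h • T (((1:ℝ)/72) • y1 - ((1:ℝ)/24) • y3 + ((25:ℝ)/72) • y4 + ((1:ℝ)/72) • y6) := by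
    have e : φ2 - φ1 = (φ2 - φ0) - (φ1 - φ0) := by abel
    rw [e, hscheme1, hscheme2, ← smul_sub, ← map_sub]
    congr 2
    module
  have h32 : φ3 - φ2 =
      h • T (((1:ℝ)/72) • y1 - ((1:ℝ)/24) • y3 + ((1:ℝ)/72) • y4 + ((25:ℝ)/72) • y6) := by
    have e : φ3 - φ2 = (φ3 - φ0) - (φ2 - φ0) := by abel
    rw [e, hscheme2, hscheme3, ← smul_sub, ← map_sub]
    congr 2
    module
  set Z1 : V := (25:ℝ) • y1 - (3:ℝ) • y3 + y4 + y6 with hZ1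
  set Z2 : V := (2:ℝ) • y3 - (9:ℝ) • y4 - (9:ℝ) • y6 with hZ2
  set Z3 : V := y4 - y6 with hZ3
  have key : E3 - E0 =
      h * ((1/1600) * ⟪T Z1, Z1⟫ + (1/400) * ⟪T Z2, Z2⟫ + (3/16) * ⟪T Z3, Z3⟫) := by
    have step : E3 - E0 = (9/8) * ⟪φ1 - φ0, y1⟫ - (1/8) * ⟪φ3 - φ0, y3⟫
        + (9/8) * ⟪φ2 - φ1, y4⟫ + (9/8) * ⟪φ3 - φ2, y6⟫ := by
      linear_combination (9/8) * hdvd1 - (1/8) * hdvd3 + (9/8) * hdvd4 + (9/8) * hdvd6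
    rw [step, hscheme1, hscheme3, h21, h32, hZ1, hZ2, hZ3]
    simp only [map_add, map_sub, map_smul, inner_add_left, inner_sub_left,
      inner_add_right, inner_sub_right, real_inner_smul_left, real_inner_smul_right]
    ring
  have n1 := hT Z1
  have n2 := hT Z2
  have n3 := hT Z3
  have hq : (1/1600) * ⟪T Z1, Z1⟫ + (1/400) * ⟪T Z2, Z2⟫ + (3/16) * ⟪T Z3, Z3⟫ ≤ 0 := by
    linarith
  linarith [mul_nonpos_of_nonneg_of_nonpos hh hq]
end

section
/- Let V be a real inner product space, let Ec, Ee : V → ℝ be convex functions, and suppose Ec has gradient gc(x) at every point x ∈ V and Ee has gradient ge(x) at every point x ∈ V. Set E = Ec − Ee. Then for all φ0, φ1 ∈ V: E(φ1) − E(φ0) ≤ ⟪gc(φ1) − ge(φ0), φ1 − φ0⟫. -/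
open RealInnerProductSpace

lemma convex_grad_ineq {V : Type*} [NormedAddCommGroup V] [InnerProductSpace ℝ V]
    (f : V → ℝ) (hf : ConvexOn ℝ Set.univ f) {x y : V} {f' : V →L[ℝ] ℝ}
    (hd : HasFDerivAt f f' x) : f' (y - x) ≤ f y - f x := by
  set L : ℝ →ᵃ[ℝ] V := AffineMap.lineMap x y with hL
  have hg : ConvexOn ℝ Set.univ (f ∘ L) := by
    have := hf.comp_affineMap L
    simpa using this
  have hline : ∀ t : ℝ, HasDerivAt (fun t : ℝ => L t) (y - x) t := by
    intro t
    have : HasDerivAt (fun t : ℝ => x + t • (y - x)) (y - x) t := by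
      simpa using ((hasDerivAt_id t).smul_const (y - x)).const_add x
    simpa [hL, AffineMap.lineMap_apply, vsub_eq_sub, vadd_eq_add, add_comm] using this
  have hg0 : HasDerivAt (f ∘ L) (f' (y - x)) 0 := by
    have h0 : (L (0:ℝ)) = x := by simp [hL]
    have hd' : HasFDerivAt f f' (L (0:ℝ)) := h0 ▸ hd
    exact hd'.comp_hasDerivAt (0:ℝ) (hline 0)
  have := hg.le_slope_of_hasDerivAt (x := (0:ℝ)) (y := 1) trivial trivial one_pos hg0
  have hs : slope (f ∘ L) 0 1 = f y - f x := by
    simp [slope, hL]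
  rw [hs] at this
  exact this

/-- Inequality (3.6) of the paper: convex-splitting relaxed DVD inequality.
For a convex splitting `E = Ec − Ee` with gradients `gc`, `ge`, the choice
`μ[φ1, φ0] = gc(φ1) − ge(φ0)` satisfies the relaxed DVD relation. Here
"`g` is a gradient of `f` at `x`" means `f` is differentiable at `x` with
derivative `v ↦ ⟪g, v⟫`. -/
theorem convex_splitting_relaxed_dvd
    {V : Type*} [NormedAddCommGroup V] [InnerProductSpace ℝ V]
    (Ec Ee : V → ℝ) (gc ge : V → V)
    (hEc : ConvexOn ℝ Set.univ Ec) (hEe : ConvexOn ℝ Set.univ Ee)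
    (hgc : ∀ x : V, HasFDerivAt Ec (innerSL ℝ (gc x)) x)
    (hge : ∀ x : V, HasFDerivAt Ee (innerSL ℝ (ge x)) x)
    (φ0 φ1 : V) :
    (Ec φ1 - Ee φ1) - (Ec φ0 - Ee φ0) ≤ ⟪gc φ1 - ge φ0, φ1 - φ0⟫ := by
  have h1 : ⟪gc φ1, φ0 - φ1⟫ ≤ Ec φ0 - Ec φ1 := by
    simpa using convex_grad_ineq Ec hEc (y := φ0) (hgc φ1)
  have h2 : ⟪ge φ0, φ1 - φ0⟫ ≤ Ee φ1 - Ee φ0 := by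
    simpa using convex_grad_ineq Ee hEe (y := φ1) (hge φ0)
  have key : ⟪gc φ1, φ1 - φ0⟫ = -⟪gc φ1, φ0 - φ1⟫ := by
    rw [← inner_neg_right]; congr 1; abel
  rw [inner_sub_left, key]
  linarith
end

section
/- Let V be a real inner product space, let Ec, Ee : V → ℝ be convex functions with gradients gc(x) and ge(x) at every point x ∈ V respectively, set E = Ec − Ee, let T : V → V be a linear map satisfying ⟪T x, x⟫ ≤ 0 for all x ∈ V, and let h ≥ 0. If φ0, φ1 ∈ V satisfy the stabilization scheme φ1 − φ0 = h • T (gc(φ1) − ge(φ0)), then E(φ1) ≤ E(φ0). -/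
open RealInnerProductSpace

/-- Along the segment `t ↦ lineMap x y t` the function is convex in `t`, so its derivative at
`t = 0` is bounded by the secant slope over `[0, 1]`. -/
theorem ConvexOn.apply_add_le_of_hasFDerivAt {E : Type*} [NormedAddCommGroup E] [NormedSpace ℝ E]
    {s : Set E} {f : E → ℝ} {f' : E →L[ℝ] ℝ} {x y : E} (hf : ConvexOn ℝ s f) (hx : x ∈ s)
    (hy : y ∈ s) (hd : HasFDerivAt f f' x) :
    f x + f' (y - x) ≤ f y := by
  let ℓ : ℝ →ᵃ[ℝ] E := AffineMap.lineMap x y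
  have hline : ConvexOn ℝ (ℓ ⁻¹' s) (f ∘ ℓ) := hf.comp_affineMap ℓ
  have hderiv : HasDerivAt (f ∘ ℓ) (f' (y - x)) 0 := by
    refine HasFDerivAt.comp_hasDerivAt (0 : ℝ) ?_ AffineMap.hasDerivAt_lineMap
    simpa [ℓ] using hd
  have hslope := hline.le_slope_of_hasDerivAt (x := 0) (y := 1) (by simpa [ℓ] using hx)
    (by simpa [ℓ] using hy) zero_lt_one hderiv
  simp only [slope_def_field, Function.comp_apply, ℓ, AffineMap.lineMap_apply_one,
    AffineMap.lineMap_apply_zero, sub_zero, div_one] at hslope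
  linarith

/-- The convex-splitting bound: treating the convex part implicitly and the concave part `-Ee`
explicitly gives an energy increment bounded by the discrete dissipation term. -/
theorem ConvexOn.sub_energy_le_inner_of_hasFDerivAt {V : Type*} [NormedAddCommGroup V]
    [InnerProductSpace ℝ V] {s : Set V} {Ec Ee : V → ℝ} {gc ge : V → V} {φ0 φ1 : V}
    (hEc : ConvexOn ℝ s Ec) (hEe : ConvexOn ℝ s Ee) (hφ0 : φ0 ∈ s) (hφ1 : φ1 ∈ s)
    (hgc : HasFDerivAt Ec (innerSL ℝ (gc φ1)) φ1) (hge : HasFDerivAt Ee (innerSL ℝ (ge φ0)) φ0) :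
    (Ec φ1 - Ee φ1) - (Ec φ0 - Ee φ0) ≤ ⟪gc φ1 - ge φ0, φ1 - φ0⟫ := by
  have hc := hEc.apply_add_le_of_hasFDerivAt hφ1 hφ0 hgc
  have he := hEe.apply_add_le_of_hasFDerivAt hφ0 hφ1 hge
  rw [innerSL_apply_apply, ← neg_sub φ1 φ0, inner_neg_right] at hc
  rw [innerSL_apply_apply] at he
  rw [inner_sub_left]
  linarith

/-- Unconditional energy stability of the convex-splitting/stabilization relaxed
DVD scheme (3.7) of the paper (part of Theorem 3.1). Here "`g` is a gradient of
`f` at `x`" means `f` is differentiable at `x` with derivative `v ↦ ⟪g, v⟫`. -/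
theorem convex_splitting_scheme_energy_stable
    {V : Type*} [NormedAddCommGroup V] [InnerProductSpace ℝ V]
    (Ec Ee : V → ℝ) (gc ge : V → V)
    (hEc : ConvexOn ℝ Set.univ Ec) (hEe : ConvexOn ℝ Set.univ Ee)
    (hgc : ∀ x : V, HasFDerivAt Ec (innerSL ℝ (gc x)) x)
    (hge : ∀ x : V, HasFDerivAt Ee (innerSL ℝ (ge x)) x)
    (T : V →ₗ[ℝ] V) (hT : ∀ x : V, ⟪T x, x⟫ ≤ 0)
    (h : ℝ) (hh : 0 ≤ h)
    (φ0 φ1 : V)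
    (hscheme : φ1 - φ0 = h • T (gc φ1 - ge φ0)) :
    Ec φ1 - Ee φ1 ≤ Ec φ0 - Ee φ0 := by
  have hdissipation : ⟪gc φ1 - ge φ0, φ1 - φ0⟫ ≤ 0 := by
    rw [hscheme, real_inner_smul_right, real_inner_comm]
    exact mul_nonpos_of_nonneg_of_nonpos hh (hT _)
  linarith [hEc.sub_energy_le_inner_of_hasFDerivAt hEe trivial trivial (hgc φ1) (hge φ0)]
end

section
/- Let V be a real inner product space, let L : V → V be a self-adjoint linear map (⟪L x, y⟫ = ⟪x, L y⟫ for all x, y), let γ ∈ ℝ, let m be a positive natural number, let b ∈ V, and define the modified energy Ê(φ, r) = (γ/2) ⟪φ, L φ⟫ + r^m for φ ∈ V and r ∈ ℝ. Suppose φ0, φ1 ∈ V and r0, r1 ∈ ℝ satisfy r1 − r0 = ⟪b, φ1 − φ0⟫, and define μ = (γ/2) • L(φ1 + φ0) + (∑_{k=0}^{m−1} r1^k · r0^{m−1−k}) • b. Then Ê(φ1, r1) − Ê(φ0, r0) = ⟪φ1 − φ0, μ⟫. -/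
open RealInnerProductSpace Finset

/-- Relation (3.15) of the paper: exact discrete variational derivative identity
for the SAV-type relaxed DVD method with modified energy
`Ê(φ, r) = (γ/2)⟪φ, Lφ⟫ + r^m`. -/
theorem sav_relaxed_dvd_relation
    {V : Type*} [NormedAddCommGroup V] [InnerProductSpace ℝ V]
    (L : V →ₗ[ℝ] V) (hL : ∀ x y : V, ⟪L x, y⟫ = ⟪x, L y⟫)
    (γ : ℝ) (m : ℕ) (hm : 0 < m) (b : V)
    (φ0 φ1 : V) (r0 r1 : ℝ)
    (hr : r1 - r0 = ⟪b, φ1 - φ0⟫)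
    (μ : V)
    (hμ : μ = (γ/2) • L (φ1 + φ0) + (∑ k ∈ Finset.range m, r1^k * r0^(m-1-k)) • b) :
    ((γ/2) * ⟪φ1, L φ1⟫ + r1^m) - ((γ/2) * ⟪φ0, L φ0⟫ + r0^m) = ⟪φ1 - φ0, μ⟫ := by
  subst hμ
  rw [inner_add_right, real_inner_smul_right, real_inner_smul_right]
  have h1 : ⟪φ1 - φ0, L (φ1 + φ0)⟫ = ⟪φ1, L φ1⟫ - ⟪φ0, L φ0⟫ := by
    rw [map_add, inner_add_right, inner_sub_left, inner_sub_left]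
    have h := hL φ0 φ1
    have h' := real_inner_comm φ1 (L φ0)
    ring_nf
    linarith
  have h2 : r1 ^ m - r0 ^ m =
      (∑ k ∈ Finset.range m, r1^k * r0^(m-1-k)) * (r1 - r0) := (geom_sum₂_mul r1 r0 m).symm
  rw [h1]
  have hr' : (⟪φ1 - φ0, b⟫ : ℝ) = r1 - r0 := (real_inner_comm b (φ1 - φ0)).trans hr.symm
  linear_combination h2 - (∑ k ∈ Finset.range m, r1^k * r0^(m-1-k)) * hr'
end

section
/- Let V be a real inner product space, let L : V → V be a self-adjoint linear map (⟪L x, y⟫ = ⟪x, L y⟫ for all x, y), let T : V → V be a linear map satisfying ⟪T x, x⟫ ≤ 0 for all x ∈ V, let γ ∈ ℝ, h ≥ 0, let m be a positive natural number, let b ∈ V, and define the modified energy Ê(φ, r) = (γ/2) ⟪φ, L φ⟫ + r^m. Suppose φ0, φ1 ∈ V and r0, r1 ∈ ℝ satisfy the relaxed DVD scheme: μ = (γ/2) • L(φ1 + φ0) + (∑_{k=0}^{m−1} r1^k · r0^{m−1−k}) • b, φ1 = φ0 + h • T μ, and r1 = r0 + ⟪b, φ1 − φ0⟫. Then Ê(φ1,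 r1) ≤ Ê(φ0, r0). -/
open RealInnerProductSpace Finset

/-- SAV-type part of Theorem 3.1 of the paper: the relaxed DVD scheme (3.17)
with scalar auxiliary variable is unconditionally energy stable with respect to
the modified energy `Ê(φ, r) = (γ/2)⟪φ, Lφ⟫ + r^m`. -/
theorem sav_relaxed_dvd_energy_stable
    {V : Type*} [NormedAddCommGroup V] [InnerProductSpace ℝ V]
    (L : V →ₗ[ℝ] V) (hL : ∀ x y : V, ⟪L x, y⟫ = ⟪x, L y⟫)
    (T : V →ₗ[ℝ] V) (hT : ∀ x : V, ⟪T x, x⟫ ≤ 0)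
    (γ h : ℝ) (hh : 0 ≤ h) (m : ℕ) (hm : 0 < m) (b : V)
    (φ0 φ1 : V) (r0 r1 : ℝ) (μ : V)
    (hμ : μ = (γ/2) • L (φ1 + φ0) + (∑ k ∈ Finset.range m, r1^k * r0^(m-1-k)) • b)
    (hφ : φ1 = φ0 + h • T μ)
    (hr : r1 = r0 + ⟪b, φ1 - φ0⟫) :
    (γ/2) * ⟪φ1, L φ1⟫ + r1^m ≤ (γ/2) * ⟪φ0, L φ0⟫ + r0^m := by
  set S := ∑ k ∈ Finset.range m, r1^k * r0^(m-1-k) with hS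
  have hrm : r1^m - r0^m = S * (r1 - r0) := (geom_sum₂_mul r1 r0 m).symm
  have hdiff : φ1 - φ0 = h • T μ := by rw [hφ]; abel
  have hrdiff : r1 - r0 = ⟪b, φ1 - φ0⟫ := by rw [hr]; ring
  have cross : ⟪L φ1, φ0⟫ = ⟪L φ0, φ1⟫ := by
    rw [hL]; exact real_inner_comm _ _
  have key : (γ/2) * ⟪φ1, L φ1⟫ + r1^m - ((γ/2) * ⟪φ0, L φ0⟫ + r0^m)
      = ⟪μ, φ1 - φ0⟫ := by
    rw [hμ]
    rw [inner_add_left, real_inner_smul_left, real_inner_smul_left, map_add,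
      inner_add_left, inner_sub_right, inner_sub_right]
    have h1 := hL φ1 φ1
    have h0 := hL φ0 φ0
    have hc1 : ⟪L φ1, φ1⟫ = ⟪φ1, L φ1⟫ := hL φ1 φ1
    have hc0 : ⟪L φ0, φ0⟫ = ⟪φ0, L φ0⟫ := hL φ0 φ0
    rw [hc1, hc0, cross]
    rw [← hrdiff] at *
    nlinarith [hrm]
  have hfin : ⟪μ, φ1 - φ0⟫ ≤ 0 := by
    rw [hdiff, real_inner_smul_right, real_inner_comm]
    exact mul_nonpos_of_nonneg_of_nonpos hh (hT μ)
  linarith [key ▸ hfin]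
end

section
/- Let N be a positive natural number, let L be a real symmetric N×N matrix, let γ ∈ ℝ, let m be a positive natural number, and define the modified energy Ê(φ, Q) = (γ/2) ∑_j φ j * (L.mulVec φ) j + ∑_j (Q j)^m for φ, Q : Fin N → ℝ. Suppose φ0, φ1, Q0, Q1, b : Fin N → ℝ satisfy the pointwise auxiliary-variable update Q1 j − Q0 j = b j * (φ1 j − φ0 j) for every j, and define μ : Fin N → ℝ by μ j = (γ/2) * (L.mulVec (φ1 + φ0)) j + (∑_{k=0}^{m−1} (Q1 j)^k * (Q0 j)^{m−1−k}) * b j. Then Ê(φ1, Q1) − Ê(φ0, Q0) = ∑_j (φ1 j − φ0 j) * μ j. -/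
open Finset

/-- Relations (3.8)–(3.9) of the paper in a fully discrete setting: the IEQ-type
relaxed DVD discrete variational derivative exactly reproduces the modified
energy difference `Ê(φ, Q) = (γ/2)⟨φ, Lφ⟩ + ∑ Q^m`. -/
theorem ieq_relaxed_dvd_relation
    (N : ℕ) (hN : 0 < N)
    (L : Matrix (Fin N) (Fin N) ℝ) (hL : L.IsSymm)
    (γ : ℝ) (m : ℕ) (hm : 0 < m)
    (φ0 φ1 Q0 Q1 b μ : Fin N → ℝ)
    (hQ : ∀ j, Q1 j - Q0 j = b j * (φ1 j - φ0 j))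
    (hμ : ∀ j, μ j = (γ/2) * (L.mulVec (φ1 + φ0)) j +
      (∑ k ∈ Finset.range m, (Q1 j)^k * (Q0 j)^(m-1-k)) * b j) :
    ((γ/2) * ∑ j, φ1 j * (L.mulVec φ1) j + ∑ j, (Q1 j)^m) -
      ((γ/2) * ∑ j, φ0 j * (L.mulVec φ0) j + ∑ j, (Q0 j)^m) =
      ∑ j, (φ1 j - φ0 j) * μ j := by
  have cross : ∑ j, φ0 j * (L.mulVec φ1) j = ∑ j, φ1 j * (L.mulVec φ0) j := by
    simp only [Matrix.mulVec, dotProduct, Finset.mul_sum]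
    rw [Finset.sum_comm]
    refine Finset.sum_congr rfl fun i _ => Finset.sum_congr rfl fun j _ => ?_
    rw [hL.apply]
    ring
  have hR : ∑ j, (φ1 j - φ0 j) * μ j
      = (γ/2) * (∑ j, (φ1 j - φ0 j) * ((L.mulVec φ1) j + (L.mulVec φ0) j))
        + (∑ j, (Q1 j)^m - ∑ j, (Q0 j)^m) := by
    rw [← Finset.sum_sub_distrib, Finset.mul_sum, ← Finset.sum_add_distrib]
    refine Finset.sum_congr rfl fun j _ => ?_
    rw [hμ j, Matrix.mulVec_add]
    have h1 : (∑ k ∈ Finset.range m, (Q1 j)^k * (Q0 j)^(m-1-k)) * (Q1 j - Q0 j)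
        = (Q1 j)^m - (Q0 j)^m := geom_sum₂_mul _ _ m
    rw [hQ j] at h1
    simp only [Pi.add_apply]
    linear_combination h1
  rw [hR]
  have expand : ∑ j, (φ1 j - φ0 j) * ((L.mulVec φ1) j + (L.mulVec φ0) j)
      = (∑ j, φ1 j * (L.mulVec φ1) j + ∑ j, φ1 j * (L.mulVec φ0) j)
        - (∑ j, φ0 j * (L.mulVec φ1) j + ∑ j, φ0 j * (L.mulVec φ0) j) := by
    rw [← Finset.sum_add_distrib, ← Finset.sum_add_distrib, ← Finset.sum_sub_distrib]
    exact Finset.sum_congr rfl fun j _ => by ring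
  rw [expand, cross]
  ring
end

section
/- Let N be a positive natural number, let L and G be real N×N matrices with L symmetric and G satisfying ∑_j x j * (G.mulVec x) j ≤ 0 for all x : Fin N → ℝ, let γ ∈ ℝ, h ≥ 0, let m be a positive natural number, and define the modified energy Ê(φ, Q) = (γ/2) ∑_j φ j * (L.mulVec φ) j + ∑_j (Q j)^m. Suppose φ0, φ1, Q0, Q1, b : Fin N → ℝ satisfy the IEQ-type relaxed DVD scheme: μ j = (γ/2) * (L.mulVec (φ1 + φ0)) j + (∑_{k=0}^{m−1} (Q1 j)^k * (Q0 j)^{m−1−k}) * b j for every j, φ1 = φ0 + h • G.mulVec μ, and Q1 j = Q0 j + b j * (φ1 j − φ0 j) for every j. Then Ê(φ1, Q1) ≤ Ê(φ0, Q0). -/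
open Finset Matrix

/-- IEQ-type part of Theorem 3.1 of the paper in a fully discrete setting: the
relaxed DVD scheme (3.10) with pointwise auxiliary variable `Q` is
unconditionally energy stable with respect to the modified energy
`Ê(φ, Q) = (γ/2)⟨φ, Lφ⟩ + ∑ Q^m`. -/
theorem ieq_relaxed_dvd_energy_stable
    (N : ℕ) (hN : 0 < N)
    (L G : Matrix (Fin N) (Fin N) ℝ) (hL : L.IsSymm)
    (hG : ∀ x : Fin N → ℝ, ∑ j, x j * (G.mulVec x) j ≤ 0)
    (γ h : ℝ) (hh : 0 ≤ h) (m : ℕ) (hm : 0 < m)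
    (φ0 φ1 Q0 Q1 b μ : Fin N → ℝ)
    (hμ : ∀ j, μ j = (γ/2) * (L.mulVec (φ1 + φ0)) j +
      (∑ k ∈ Finset.range m, (Q1 j)^k * (Q0 j)^(m-1-k)) * b j)
    (hφ : φ1 = φ0 + h • G.mulVec μ)
    (hQ : ∀ j, Q1 j = Q0 j + b j * (φ1 j - φ0 j)) :
    (γ/2) * ∑ j, φ1 j * (L.mulVec φ1) j + ∑ j, (Q1 j)^m ≤
      (γ/2) * ∑ j, φ0 j * (L.mulVec φ0) j + ∑ j, (Q0 j)^m := by
  have hsym : ∑ j, φ1 j * (L.mulVec φ0) j = ∑ j, φ0 j * (L.mulVec φ1) j := by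
    have : φ1 ⬝ᵥ L.mulVec φ0 = φ0 ⬝ᵥ L.mulVec φ1 := by
      rw [Matrix.dotProduct_mulVec, ← Matrix.mulVec_transpose, hL.eq,
        dotProduct_comm]
    simpa [dotProduct] using this
  have hLadd : L.mulVec (φ1 + φ0) = L.mulVec φ1 + L.mulVec φ0 :=
    Matrix.mulVec_add L φ1 φ0
  have e1 : ∀ j, (φ1 j - φ0 j) * μ j =
      (γ/2) * (φ1 j * (L.mulVec φ1) j - φ0 j * (L.mulVec φ0) j
        + (φ1 j * (L.mulVec φ0) j - φ0 j * (L.mulVec φ1) j))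
      + ((Q1 j)^m - (Q0 j)^m) := by
    intro j
    have hq : (∑ k ∈ Finset.range m, (Q1 j)^k * (Q0 j)^(m-1-k)) * (Q1 j - Q0 j)
        = (Q1 j)^m - (Q0 j)^m := geom_sum₂_mul (Q1 j) (Q0 j) m
    have hb : Q1 j - Q0 j = b j * (φ1 j - φ0 j) := by rw [hQ j]; ring
    rw [hb] at hq
    rw [hμ j, hLadd, Pi.add_apply]
    linear_combination hq
  have esum : ∑ j, (φ1 j - φ0 j) * μ j =
      ((γ/2) * ∑ j, φ1 j * (L.mulVec φ1) j + ∑ j, (Q1 j)^m)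
      - ((γ/2) * ∑ j, φ0 j * (L.mulVec φ0) j + ∑ j, (Q0 j)^m) := by
    rw [Finset.sum_congr rfl fun j _ => e1 j]
    rw [Finset.sum_add_distrib, Finset.sum_sub_distrib, ← Finset.mul_sum,
      Finset.sum_add_distrib, Finset.sum_sub_distrib, Finset.sum_sub_distrib, hsym]
    ring
  have hstep : ∑ j, (φ1 j - φ0 j) * μ j = h * ∑ j, μ j * (G.mulVec μ) j := by
    rw [Finset.mul_sum]
    refine Finset.sum_congr rfl fun j _ => ?_
    rw [hφ]
    simp [Pi.add_apply, Pi.smul_apply, smul_eq_mul]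
    ring
  have hle : ∑ j, (φ1 j - φ0 j) * μ j ≤ 0 := by
    rw [hstep]
    exact mul_nonpos_of_nonneg_of_nonpos hh (hG μ)
  linarith [esum ▸ hle]
end

section
/- Let N be a positive natural number, let Δx > 0, γ ∈ ℝ, and ε a nonzero real number. For a periodic grid function φ : ZMod N → ℝ define the discrete free energy Ẽ(φ) = ∑_j Δx * [ (γ/4) * ( ((φ (j+1) − φ j)/Δx)² + ((φ j − φ (j−1))/Δx)² ) + (1/(4ε²)) * (1 − (φ j)²)² ]. For φ, ψ : ZMod N → ℝ define the discrete variational derivative μ̃ : ZMod N → ℝ by μ̃ j = −(γ/2) * ( (φ (j+1) − 2φ j + φ (j−1))/Δx² + (ψ (j+1) − 2ψ j + ψ (j−1))/Δx² ) + (1/(4ε²)) * (φ j + ψ j) * ((φ j)² + (ψ j)² − 2). Then the exact discrete variational derivative relation holds: Ẽ(φ) − Ẽ(ψ) = ∑_j Δx * (φ j − ψ j) * μ̃ j. -/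
open Finset

/-- The discrete Ginzburg–Landau free energy (4.5) of the paper on a uniform
periodic one-dimensional grid with mesh size `Δx` (indices in `ZMod N`). -/
noncomputable def discreteFreeEnergy (N : ℕ) [NeZero N] (Δx γ ε : ℝ)
    (φ : ZMod N → ℝ) : ℝ :=
  ∑ j : ZMod N, Δx * ((γ/4) * (((φ (j+1) - φ j)/Δx)^2 + ((φ j - φ (j-1))/Δx)^2) +
    (1/(4*ε^2)) * (1 - (φ j)^2)^2)

/-- Formula (4.6) of the paper: the fully discrete variational derivative
`μ̃[φ^j, ψ^j] = −(γ/2)([D_x²φ]^j + [D_x²ψ]^j) + E1{φ^j, ψ^j}` exactly reproduces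
the discrete free-energy difference. -/
theorem discrete_dvd_relation
    (N : ℕ) [NeZero N] (Δx : ℝ) (hΔx : 0 < Δx) (γ ε : ℝ) (hε : ε ≠ 0)
    (φ ψ : ZMod N → ℝ) (μ : ZMod N → ℝ)
    (hμ : ∀ j : ZMod N, μ j =
      -(γ/2) * ((φ (j+1) - 2*φ j + φ (j-1))/Δx^2 + (ψ (j+1) - 2*ψ j + ψ (j-1))/Δx^2) +
      (1/(4*ε^2)) * (φ j + ψ j) * ((φ j)^2 + (ψ j)^2 - 2)) :
    discreteFreeEnergy N Δx γ ε φ - discreteFreeEnergy N Δx γ ε ψ =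
      ∑ j : ZMod N, Δx * (φ j - ψ j) * μ j := by
  have hd : Δx ≠ 0 := hΔx.ne'
  have shift : ∀ f : ZMod N → ℝ, ∑ j : ZMod N, f (j - 1) = ∑ j : ZMod N, f j := by
    intro f
    exact Fintype.sum_equiv (Equiv.subRight 1) _ _ (fun j => rfl)
  set X : ZMod N → ℝ := fun j =>
    Δx*(γ/4)*(((φ (j+1) - φ j)/Δx)^2 - ((ψ (j+1) - ψ j)/Δx)^2) +
      (γ/2)*(φ j - ψ j)*((φ (j+1) + ψ (j+1)) - (φ j + ψ j))/Δx with hX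
  set Y : ZMod N → ℝ := fun j =>
    Δx*(γ/4)*(((φ (j+1) - φ j)/Δx)^2 - ((ψ (j+1) - ψ j)/Δx)^2) -
      (γ/2)*(φ (j+1) - ψ (j+1))*((φ (j+1) + ψ (j+1)) - (φ j + ψ j))/Δx with hY
  have main : discreteFreeEnergy N Δx γ ε φ - discreteFreeEnergy N Δx γ ε ψ -
      ∑ j : ZMod N, Δx * (φ j - ψ j) * μ j = ∑ j : ZMod N, (X j + Y (j-1)) := by
    unfold discreteFreeEnergy
    rw [← Finset.sum_sub_distrib, ← Finset.sum_sub_distrib]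
    refine Finset.sum_congr rfl fun j _ => ?_
    rw [hμ j, hX, hY]
    simp only [sub_add_cancel]
    field_simp
    ring
  have zero : ∑ j : ZMod N, (X j + Y (j-1)) = 0 := by
    rw [Finset.sum_add_distrib, shift Y, ← Finset.sum_add_distrib]
    refine Finset.sum_eq_zero fun j _ => ?_
    rw [hX, hY]
    field_simp
    ring
  linarith [main, zero]
end

section
/- Let N be a positive natural number, let Δx > 0, h ≥ 0, γ ∈ ℝ, and ε a nonzero real number. For a periodic grid function φ : ZMod N → ℝ define the discrete free energy Ẽ(φ) = ∑_j Δx * [ (γ/4) * ( ((φ (j+1) − φ j)/Δx)² + ((φ j − φ (j−1))/Δx)² ) + (1/(4ε²)) * (1 − (φ j)²)² ]. Suppose φ0, φ1 : ZMod N → ℝ satisfy the fully discrete one-stage DVD scheme for the Cahn–Hilliard (H^{-1}) gradient flow: defining μ̃ : ZMod N → ℝ by μ̃ j = −(γ/2) * ( (φ1 (j+1) − 2 φ1 j + φ1 (j−1))/Δx² + (φ0 (j+1) − 2 φ0 j + φ0 (j−1))/Δx² ) + (1/(4ε²)) * (φ1 j + φ0 j) * ((φ1 j)² + (φ0 j)²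 − 2), one has φ1 j = φ0 j + h * (μ̃ (j+1) − 2 μ̃ j + μ̃ (j−1))/Δx² for every j ∈ ZMod N. Then Ẽ(φ1) ≤ Ẽ(φ0). -/
open Finset

section aux

variable {N : ℕ} [NeZero N]

private lemma sum_shift (f : ZMod N → ℝ) :
    ∑ j : ZMod N, f (j + 1) = ∑ j : ZMod N, f j :=
  Fintype.sum_equiv (Equiv.addRight (1 : ZMod N)) _ _ (fun _ => rfl)

private lemma sum_telescope (f : ZMod N → ℝ) :
    ∑ j : ZMod N, (f (j + 1) - f j) = 0 := by
  rw [Finset.sum_sub_distrib, sum_shift f, sub_self]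

/-- Summation by parts on the periodic grid. -/
private lemma sbp (f g : ZMod N → ℝ) :
    ∑ j : ZMod N, (f (j+1) - f j) * (g (j+1) - g j)
      = -∑ j : ZMod N, (f (j+1) - 2*f j + f (j-1)) * g j := by
  have h1 : ∑ j : ZMod N, (f (j+1) * g (j+1) - f j * g j) = 0 :=
    sum_telescope (fun j => f j * g j)
  have h2 : ∑ j : ZMod N, (f j * g (j+1) - f (j-1) * g j) = 0 := by
    have := sum_telescope (fun j => f (j-1) * g j)
    simpa using this
  have key : ∑ j : ZMod N,
      ((f (j+1) - f j) * (g (j+1) - g j) + (f (j+1) - 2*f j + f (j-1)) * g j)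
      = ∑ j : ZMod N,
      ((f (j+1) * g (j+1) - f j * g j) - (f j * g (j+1) - f (j-1) * g j)) :=
    Finset.sum_congr rfl (fun j _ => by ring)
  rw [Finset.sum_add_distrib] at key
  rw [Finset.sum_sub_distrib, h1, h2, sub_zero] at key
  linarith

end aux

/-- Theorem 4.1 of the paper for the one-stage tableau Sch-1: the fully discrete
DVD scheme (4.7) for the H⁻¹ (Cahn–Hilliard) gradient flow on a uniform
periodic one-dimensional grid is unconditionally energy stable. -/
theorem fully_discrete_sch1_cahn_hilliard_energy_stable
    (N : ℕ) [NeZero N] (Δx : ℝ) (hΔx : 0 < Δx) (h : ℝ) (hh : 0 ≤ h)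
    (γ ε : ℝ) (hε : ε ≠ 0)
    (φ0 φ1 : ZMod N → ℝ) (μ : ZMod N → ℝ)
    (hμ : ∀ j : ZMod N, μ j =
      -(γ/2) * ((φ1 (j+1) - 2*φ1 j + φ1 (j-1))/Δx^2 +
                (φ0 (j+1) - 2*φ0 j + φ0 (j-1))/Δx^2) +
      (1/(4*ε^2)) * (φ1 j + φ0 j) * ((φ1 j)^2 + (φ0 j)^2 - 2))
    (hscheme : ∀ j : ZMod N, φ1 j = φ0 j + h * (μ (j+1) - 2*μ j + μ (j-1))/Δx^2) :
    discreteFreeEnergy N Δx γ ε φ1 ≤ discreteFreeEnergy N Δx γ ε φ0 := by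
  have hΔx' : Δx ≠ 0 := ne_of_gt hΔx
  -- Rewrite the energy with only forward differences.
  have split : ∀ φ : ZMod N → ℝ, discreteFreeEnergy N Δx γ ε φ
      = ∑ j : ZMod N, (Δx * (γ/2) * ((φ (j+1) - φ j)/Δx)^2
          + Δx * (1/(4*ε^2)) * (1 - (φ j)^2)^2) := by
    intro φ
    unfold discreteFreeEnergy
    have hb : ∑ j : ZMod N, Δx * (γ/4) * ((φ j - φ (j-1))/Δx)^2
        = ∑ j : ZMod N, Δx * (γ/4) * ((φ (j+1) - φ j)/Δx)^2 := by
      have := sum_shift (fun j => Δx * (γ/4) * ((φ j - φ (j-1))/Δx)^2)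
      simpa using this.symm
    calc ∑ j : ZMod N, Δx * ((γ/4) * (((φ (j+1) - φ j)/Δx)^2 + ((φ j - φ (j-1))/Δx)^2) +
          (1/(4*ε^2)) * (1 - (φ j)^2)^2)
        = ∑ j : ZMod N, (Δx * (γ/4) * ((φ (j+1) - φ j)/Δx)^2
            + (Δx * (γ/4) * ((φ j - φ (j-1))/Δx)^2
              + Δx * (1/(4*ε^2)) * (1 - (φ j)^2)^2)) :=
          Finset.sum_congr rfl (fun j _ => by ring)
      _ = ∑ j : ZMod N, Δx * (γ/4) * ((φ (j+1) - φ j)/Δx)^2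
            + (∑ j : ZMod N, Δx * (γ/4) * ((φ j - φ (j-1))/Δx)^2
              + ∑ j : ZMod N, Δx * (1/(4*ε^2)) * (1 - (φ j)^2)^2) := by
          rw [Finset.sum_add_distrib, Finset.sum_add_distrib]
      _ = ∑ j : ZMod N, Δx * (γ/4) * ((φ (j+1) - φ j)/Δx)^2
            + (∑ j : ZMod N, Δx * (γ/4) * ((φ (j+1) - φ j)/Δx)^2
              + ∑ j : ZMod N, Δx * (1/(4*ε^2)) * (1 - (φ j)^2)^2) := by rw [hb]
      _ = ∑ j : ZMod N, (Δx * (γ/2) * ((φ (j+1) - φ j)/Δx)^2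
            + Δx * (1/(4*ε^2)) * (1 - (φ j)^2)^2) := by
          rw [← Finset.sum_add_distrib, ← Finset.sum_add_distrib]
          exact Finset.sum_congr rfl (fun j _ => by ring)
  -- the sum and difference functions
  set s : ZMod N → ℝ := fun j => φ1 j + φ0 j with hs
  set d : ZMod N → ℝ := fun j => φ1 j - φ0 j with hd
  -- exact discrete chain rule
  have chain : discreteFreeEnergy N Δx γ ε φ1 - discreteFreeEnergy N Δx γ ε φ0
      = ∑ j : ZMod N, Δx * μ j * d j := by
    rw [split φ1, split φ0, ← Finset.sum_sub_distrib]
    have step1 : ∑ j : ZMod N,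
        ((Δx * (γ/2) * ((φ1 (j+1) - φ1 j)/Δx)^2 + Δx * (1/(4*ε^2)) * (1 - (φ1 j)^2)^2)
        - (Δx * (γ/2) * ((φ0 (j+1) - φ0 j)/Δx)^2 + Δx * (1/(4*ε^2)) * (1 - (φ0 j)^2)^2))
        = ∑ j : ZMod N, ((γ/(2*Δx)) * ((s (j+1) - s j) * (d (j+1) - d j))
            + Δx * (1/(4*ε^2)) * s j * ((φ1 j)^2 + (φ0 j)^2 - 2) * d j) := by
      refine Finset.sum_congr rfl (fun j _ => ?_)
      simp only [hs, hd]
      field_simp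
      ring
    rw [step1, Finset.sum_add_distrib, ← Finset.mul_sum, sbp s d, mul_neg, Finset.mul_sum,
      ← Finset.sum_neg_distrib, ← Finset.sum_add_distrib]
    refine Finset.sum_congr rfl (fun j _ => ?_)
    rw [hμ j]
    simp only [hs, hd]
    field_simp
    ring
  -- plug in the scheme
  have step2 : ∑ j : ZMod N, Δx * μ j * d j
      = (h/Δx) * ∑ j : ZMod N, (μ (j+1) - 2*μ j + μ (j-1)) * μ j := by
    rw [Finset.mul_sum]
    refine Finset.sum_congr rfl (fun j _ => ?_)
    have : d j = h * (μ (j+1) - 2*μ j + μ (j-1))/Δx^2 := by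
      simp only [hd]; rw [hscheme j]; ring
    rw [this]
    field_simp
  have step3 : ∑ j : ZMod N, (μ (j+1) - 2*μ j + μ (j-1)) * μ j
      = -∑ j : ZMod N, (μ (j+1) - μ j)^2 := by
    have := sbp μ μ
    have h2 : ∑ j : ZMod N, (μ (j+1) - μ j) * (μ (j+1) - μ j)
        = ∑ j : ZMod N, (μ (j+1) - μ j)^2 :=
      Finset.sum_congr rfl (fun j _ => by ring)
    linarith
  have hnonneg : 0 ≤ ∑ j : ZMod N, (μ (j+1) - μ j)^2 :=
    Finset.sum_nonneg (fun j _ => sq_nonneg _)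
  have hfinal : discreteFreeEnergy N Δx γ ε φ1 - discreteFreeEnergy N Δx γ ε φ0 ≤ 0 := by
    rw [chain, step2, step3]
    have : 0 ≤ (h/Δx) := div_nonneg hh (le_of_lt hΔx)
    nlinarith
  linarith
end
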